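/- Inductive step for rows of the form 3a: let a ≥ 1, and suppose that every row k < 3a dominates all later rows. Then row 3a dominates all later rows. -/

import Mathlib

abbrev Digit := Fin 3

/-- Base-3 value of a digit string (most significant digit first). -/
def val3 (w : List Digit) : ℕ := w.foldl (fun acc d => 3 * acc + d.val) 0

/-- Helper for `addTwo`, acting on the reversed (least significant digit first) string:
replace each digit `d` by `d - 1 (mod 3)` up to and including the first digit 0;
if no digit 0 occurs, a digit 0 is first prepended at the most significant end
(and then becomes 2). -/
def addTwoAux : List Digit → List Digit
  | [] => [2]
  | d :: rest => if d = 0 then (d + 2) :: rest else (d + 2) :: addTwoAux rest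

/-- Adding two in base 3/2: all digits at or to the right of the rightmost 0
(including that 0) are decreased by 1 modulo 3; if there is no 0, a 0 is first
prepended. -/
def addTwo (w : List Digit) : List Digit := (addTwoAux w.reverse).reverse

open Fin.NatCast in
/-- Binary representation of `j` (digits 0 and 1, most significant first, no leading
zeros), with `binRep 0 = [0]`. -/
def binRep (j : ℕ) : List Digit :=
  if j = 0 then [0] else (Nat.digits 2 j).reverse.map (fun d => (d : Digit))

/-- The grid: row 0 consists of the binary representations in increasing order, and
each subsequent row is obtained entrywise by adding two in base 3/2. -/
def G : ℕ → ℕ → List Digit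
  | 0, j => binRep j
  | i + 1, j => addTwo (G i j)

/-- Row `j` dominates all later rows: every entry of any row below row `j`,
interpreted in base 3, is the last term of a nondegenerate three-term arithmetic
progression whose first two terms are entries of row `j` interpreted in base 3. -/
def Dominates (j : ℕ) : Prop :=
  ∀ i n : ℕ, j < i → ∃ p q : ℕ,
    val3 (G j p) < val3 (G j q) ∧ val3 (G j q) < val3 (G i n) ∧
    val3 (G j p) + val3 (G i n) = 2 * val3 (G j q)

/-!
Deleting the last digit of `G i (2 * n + b)` (for `b < 2`) leaves `G ⌊(2i + b)/3⌋ n`, and the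
deleted digit is `(2i + b) mod 3`. So the base-3 values in row `3a` are exactly `3v` and `3v + 1`
for `v` a value in row `2a`, while an entry of a row `i > 3a` has value `3x + d` with `x` an entry
of a row `s ≥ 2a`. If `s > 2a`, the progression ending at `x` given by row `2a` lifts to one
ending at `3x + d` with first terms in row `3a`; if `s = 2a`, then `d = 2` and `3v, 3v + 1, 3v + 2`
is the progression.
-/

open Fin.NatCast

lemma addTwo_append_singleton (w : List Digit) (d : Digit) :
    addTwo (w ++ [d]) = if d = 0 then w ++ [d + 2] else addTwo w ++ [d + 2] := by
  by_cases hd : d = 0 <;> simp [addTwo, addTwoAux, hd]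

lemma binRep_two_mul_add {n b : ℕ} (hn : 1 ≤ n) (hb : b < 2) :
    binRep (2 * n + b) = binRep n ++ [(b : Digit)] := by
  rw [binRep, binRep, if_neg (by omega), if_neg (by omega), add_comm,
    Nat.digits_add 2 one_lt_two b n hb (by omega)]
  simp

lemma G_succ_of_eq_append {i j n c : ℕ} (h : G i j = G (c / 3) n ++ [(c : Digit)]) :
    G (i + 1) j = G ((c + 2) / 3) n ++ [((c + 2 : ℕ) : Digit)] := by
  have hc : ((c : Digit) = 0 ↔ c % 3 = 0) := by
    simp [Fin.ext_iff, Fin.val_natCast]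
  rw [G, h, addTwo_append_singleton, Nat.cast_add, Nat.cast_ofNat]
  by_cases h0 : c % 3 = 0
  · rw [if_pos (hc.2 h0), show (c + 2) / 3 = c / 3 by omega]
  · rw [if_neg (mt hc.1 h0), show (c + 2) / 3 = c / 3 + 1 by omega]
    rfl

-- For `n = 0` and `i < 3` the identity can fail by a leading zero (`G 0 1 = [1]`).
lemma G_two_mul_add {i n b : ℕ} (hb : b < 2) (h : 1 ≤ n ∨ 3 ≤ i) :
    G i (2 * n + b) = G ((2 * i + b) / 3) n ++ [((2 * i + b : ℕ) : Digit)] := by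
  obtain ⟨i₀, hi₀, hbase⟩ : ∃ i₀ ≤ i,
      G i₀ (2 * n + b) = G ((2 * i₀ + b) / 3) n ++ [((2 * i₀ + b : ℕ) : Digit)] := by
    rcases Nat.eq_zero_or_pos n with rfl | hn
    · refine ⟨3, by omega, ?_⟩
      interval_cases b
      · decide
      · simp only [G, binRep]; decide
    · refine ⟨0, i.zero_le, ?_⟩
      simpa [G, Nat.div_eq_of_lt (show b < 3 by omega)] using binRep_two_mul_add hn hb
  clear h
  induction i, hi₀ using Nat.le_induction with
  | base => exact hbase
  | succ i _ ih =>
    simpa only [show 2 * (i + 1) + b = 2 * i + b + 2 by ring] using G_succ_of_eq_append ih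

lemma val3_append_singleton (w : List Digit) (d : Digit) :
    val3 (w ++ [d]) = 3 * val3 w + d := by
  simp [val3, List.foldl_append]

lemma val3_G_two_mul_add {i n b : ℕ} (hb : b < 2) (h : 1 ≤ n ∨ 3 ≤ i) :
    val3 (G i (2 * n + b)) = 3 * val3 (G ((2 * i + b) / 3) n) + (2 * i + b) % 3 := by
  rw [G_two_mul_add hb h, val3_append_singleton, Fin.val_natCast]

def IsProgressionEnd (f : ℕ → ℕ) (x : ℕ) : Prop :=
  ∃ p q, f p < f q ∧ f q < x ∧ f p + x = 2 * f q

section ThreeMulAdd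

variable {f g : ℕ → ℕ}

lemma IsProgressionEnd.three_mul_add (hg : ∀ n b, b < 2 → g (2 * n + b) = 3 * f n + b) {x : ℕ}
    (hx : IsProgressionEnd f x) {d : ℕ} (hd : d < 3) :
    IsProgressionEnd g (3 * x + d) := by
  obtain ⟨p, q, hpq, hqx, hap⟩ := hx
  have h0 := hg p 0; have h1 := hg p 1; have h0' := hg q 0; have h1' := hg q 1
  interval_cases d
  · exact ⟨2 * p + 0, 2 * q + 0, by omega⟩
  · exact ⟨2 * p + 1, 2 * q + 1, by omega⟩
  · exact ⟨2 * p + 0, 2 * q + 1, by omega⟩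

lemma isProgressionEnd_three_mul_add_two (hg : ∀ n b, b < 2 → g (2 * n + b) = 3 * f n + b)
    (n : ℕ) : IsProgressionEnd g (3 * f n + 2) :=
  ⟨2 * n + 0, 2 * n + 1, by have := hg n 0; have := hg n 1; omega⟩

end ThreeMulAdd

/-- Inductive step for rows of the form `3a`: if every row `k < 3a` dominates all
later rows, then row `3a` dominates all later rows. -/
theorem row_3a_step (a : ℕ) (ha : 1 ≤ a)
    (ih : ∀ k : ℕ, k < 3 * a → Dominates k) : Dominates (3 * a) := by
  intro i n hi
  obtain ⟨m, b, hb, rfl⟩ : ∃ m b, b < 2 ∧ n = 2 * m + b :=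
    ⟨n / 2, n % 2, Nat.mod_lt _ two_pos, (Nat.div_add_mod n 2).symm⟩
  have hrow : ∀ m b, b < 2 → val3 (G (3 * a) (2 * m + b)) = 3 * val3 (G (2 * a) m) + b := by
    intro m b hb
    rw [val3_G_two_mul_add hb (by omega), show (2 * (3 * a) + b) / 3 = 2 * a by omega,
      show (2 * (3 * a) + b) % 3 = b by omega]
  change IsProgressionEnd (fun p => val3 (G (3 * a) p)) (val3 (G i (2 * m + b)))
  rw [val3_G_two_mul_add hb (by omega)]
  rcases (show 2 * a < (2 * i + b) / 3 ∨ 2 * a = (2 * i + b) / 3 by omega) with hlt | heq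
  · exact IsProgressionEnd.three_mul_add hrow (ih (2 * a) (by omega) _ m hlt)
      (Nat.mod_lt _ three_pos)
  · rw [← heq, show (2 * i + b) % 3 = 2 by omega]
    exact isProgressionEnd_three_mul_add_two (f := fun p => val3 (G (2 * a) p)) hrow m
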